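/- Let X be a zigzag poset and F a sheaf of finite-dimensional vector spaces on X. Then H^k(X, F) = 0 for all k ≥ 2. -/

import Mathlib

open CategoryTheory

/-! Zigzag posets.  A zigzag poset is a finite poset whose Hasse diagram is a path
`x_0 — x_1 — ... — x_n` with arbitrarily oriented edges.  We encode the orientation
of the edge between `x_l` and `x_{l+1}` by `o l : Bool` (`true` means `x_l < x_{l+1}`),
and `x_i ≤ x_j` iff all the edges between them point from `x_i` towards `x_j`. -/

/-- The order relation of the zigzag poset with edge orientations `o`. -/
def zigzagLE (o : ℕ → Bool) (i j : ℕ) : Prop :=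
  (i ≤ j ∧ ∀ l, i ≤ l → l < j → o l = true) ∨
  (j ≤ i ∧ ∀ l, j ≤ l → l < i → o l = false)

theorem zigzagLE_refl (o : ℕ → Bool) (i : ℕ) : zigzagLE o i i :=
  Or.inl ⟨le_rfl, fun _ h1 h2 => absurd (lt_of_le_of_lt h1 h2) (lt_irrefl _)⟩

theorem zigzagLE_trans (o : ℕ → Bool) (i j l : ℕ)
    (h1 : zigzagLE o i j) (h2 : zigzagLE o j l) : zigzagLE o i l := by
  rcases h1 with ⟨hij, hup1⟩ | ⟨hji, hdn1⟩ <;> rcases h2 with ⟨hjl, hup2⟩ | ⟨hlj, hdn2⟩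
  · refine Or.inl ⟨le_trans hij hjl, fun m hm1 hm2 => ?_⟩
    rcases Nat.lt_or_ge m j with h | h
    · exact hup1 m hm1 h
    · exact hup2 m h hm2
  · rcases le_or_gt i l with h | h
    · exact Or.inl ⟨h, fun m hm1 hm2 => hup1 m hm1 (lt_of_lt_of_le hm2 hlj)⟩
    · exact Or.inr ⟨le_of_lt h, fun m hm1 hm2 => hdn2 m hm1 (lt_of_lt_of_le hm2 hij)⟩
  · rcases le_or_gt i l with h | h
    · exact Or.inl ⟨h, fun m hm1 hm2 => hup2 m (le_trans hji hm1) hm2⟩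
    · exact Or.inr ⟨le_of_lt h, fun m hm1 hm2 => hdn1 m (le_trans hjl hm1) hm2⟩
  · refine Or.inr ⟨le_trans hlj hji, fun m hm1 hm2 => ?_⟩
    rcases Nat.lt_or_ge m j with h | h
    · exact hdn2 m hm1 h
    · exact hdn1 m h hm2

theorem zigzagLE_antisymm (o : ℕ → Bool) (i j : ℕ)
    (h1 : zigzagLE o i j) (h2 : zigzagLE o j i) : i = j := by
  rcases h1 with ⟨hij, hup1⟩ | ⟨hji, hdn1⟩ <;>
    rcases h2 with ⟨hji', hup2⟩ | ⟨hij', hdn2⟩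
  · omega
  · rcases Nat.lt_or_ge i j with h | h
    · have ht := hup1 i le_rfl h
      have hf := hdn2 i le_rfl h
      simp [ht] at hf
    · omega
  · rcases Nat.lt_or_ge j i with h | h
    · have ht := hup2 j le_rfl h
      have hf := hdn1 j le_rfl h
      simp [ht] at hf
    · omega
  · omega

/-- The zigzag poset on `{x_0, ..., x_n}` with edge orientations `o`. -/
def Zigzag (n : ℕ) (o : ℕ → Bool) : Type := Fin (n + 1)

instance (n : ℕ) (o : ℕ → Bool) : PartialOrder (Zigzag n o) where
  le i j := zigzagLE o (Fin.val i) (Fin.val j)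
  le_refl i := zigzagLE_refl o _
  le_trans i j l := zigzagLE_trans o _ _ _
  le_antisymm i j h1 h2 := Fin.ext (zigzagLE_antisymm o _ _ h1 h2)

/-- The index of a point of the zigzag poset. -/
def Zigzag.idx {n : ℕ} {o : ℕ → Bool} (x : Zigzag n o) : ℕ := Fin.val x

/-- The alternating subposet `X' ⊆ X`: all minimal elements together with the
internal maximal elements (the maximal elements flanked by minimal elements on
both sides); this is the alternating sequence of minimal and internal maximal
elements of the zigzag. -/
def altSet (n : ℕ) (o : ℕ → Bool) : Set (Zigzag n o) :=
  {x | IsMin x ∨ (IsMax x ∧ (∃ y : Zigzag n o, IsMin y ∧ y.idx < x.idx) ∧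
    (∃ y : Zigzag n o, IsMin y ∧ x.idx < y.idx))}

/-- The alternating subposet, with the induced order. -/
def AltSub (n : ℕ) (o : ℕ → Bool) : Type := {x : Zigzag n o // x ∈ altSet n o}

instance (n : ℕ) (o : ℕ → Bool) : PartialOrder (AltSub n o) :=
  inferInstanceAs (PartialOrder {x : Zigzag n o // x ∈ altSet n o})

/-- The inclusion `ι : X' ↪ X` is order preserving. -/
lemma altIncl_monotone (n : ℕ) (o : ℕ → Bool) :
    Monotone (fun x : AltSub n o => (x.val : Zigzag n o)) := fun _ _ h => h

/-- The restriction (pullback) functor `ι*` of sheaves along the inclusion of the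
alternating subposet. -/
noncomputable def restrictAlt (n : ℕ) (o : ℕ → Bool) (C : Type*) [Category C] :
    (Zigzag n o ⥤ C) ⥤ (AltSub n o ⥤ C) :=
  (Functor.whiskeringLeft (AltSub n o) (Zigzag n o) C).obj (altIncl_monotone n o).functor

open CategoryTheory.Limits

/-!
Suppose no element of a poset `P` covers two distinct elements of a common principal up-set, so
that the Hasse diagram of each `Ici y` is a tree rooted at `y`; zigzags are of this kind. For a
vector space `V` and `x : P`, let `V_x` be `V` on the down-set of `x` and `0` elsewhere: it is the
image of `V` under the right adjoint of evaluation at `x`, hence injective. Then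
`0 → F → I₀ → I₁ → 0`, with `I₀ = ∏_v F(v)_v` and `I₁ = ∏_{u ⋖ v} F(v)_u`, is an injective
resolution. At `y` it is the coboundary map of the tree `Ici y` with coefficients in `F`: a cocycle
is determined by its value at the root, and every 1-cochain is a coboundary, obtained by
integrating outward from the root along the unique lower covers. Hence every additive functor,
`lim` in particular, has vanishing right derived functors in degrees `≥ 2`.
-/

namespace CategoryTheory

section TwoTermResolution

open ZeroObject

variable {C : Type*} [Category C] [Abelian C]

noncomputable def _root_.CochainComplex.twoTerm {X₀ X₁ : C} (g : X₀ ⟶ X₁) : CochainComplex C ℕ where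
  X | 0 => X₀ | 1 => X₁ | _ + 2 => 0
  d | 0, 1 => g | _, _ => 0
  shape
    | 0, 1, h => absurd rfl h
    | 0, 0, _ | 0, _ + 2, _ | _ + 1, _, _ => rfl
  d_comp_d'
    | 0, _, _, rfl, rfl => comp_zero
    | _ + 1, _, _, rfl, rfl => zero_comp

noncomputable def InjectiveResolution.ofShortExact {S : ShortComplex C} (hS : S.ShortExact)
    [Injective S.X₂] [Injective S.X₃] : InjectiveResolution S.X₁ where
  cocomplex := .twoTerm S.g
  injective
    | 0 => inferInstanceAs (Injective S.X₂)
    | 1 => inferInstanceAs (Injective S.X₃)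
    | _ + 2 => Injective.zero_injective
  ι := (CochainComplex.fromSingle₀Equiv _ _).symm ⟨S.f, S.zero⟩
  quasiIso := ⟨fun j => by
    rcases j with _ | _ | j
    · rw [CochainComplex.quasiIsoAt₀_iff, ShortComplex.quasiIso_iff_of_zeros _ rfl rfl rfl]
      refine (ShortComplex.exact_and_mono_f_iff_of_iso ?_).2 ⟨hS.exact, hS.mono_f⟩
      exact ShortComplex.isoMk (Iso.refl _) (Iso.refl _) (Iso.refl _)
        ((Category.id_comp _).trans ((CochainComplex.fromSingle₀Equiv_symm_apply_f_zero
          (C := .twoTerm S.g) S.f S.zero).symm.trans (Category.comp_id _).symm))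
        ((Category.id_comp _).trans (Category.comp_id _).symm)
    · rw [quasiIsoAt_iff_exactAt _ _ (CochainComplex.exactAt_succ_single_obj _ _),
        HomologicalComplex.exactAt_iff' _ 0 1 2 (by simp) (by simp)]
      exact (ShortComplex.exact_iff_epi _ rfl).2 hS.epi_g
    · rw [quasiIsoAt_iff_exactAt _ _ (CochainComplex.exactAt_succ_single_obj _ _),
        HomologicalComplex.exactAt_iff]
      exact ShortComplex.exact_of_isZero_X₂ _ (isZero_zero _)⟩

theorem InjectiveResolution.ofShortExact_isZero_X {S : ShortComplex C} (hS : S.ShortExact)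
    [Injective S.X₂] [Injective S.X₃] {j : ℕ} (hj : 2 ≤ j) :
    IsZero ((ofShortExact hS).cocomplex.X j) := by
  obtain ⟨j, rfl⟩ := Nat.exists_eq_add_of_le' hj
  exact isZero_zero _

theorem InjectiveResolution.isZero_rightDerived_obj {D : Type*} [Category D] [Abelian D]
    [HasInjectiveResolutions C] {X : C} (I : InjectiveResolution X) (G : C ⥤ D) [G.Additive]
    {j : ℕ} (hj : IsZero (I.cocomplex.X j)) : IsZero ((G.rightDerived j).obj X) :=
  (ShortComplex.isZero_homology_of_isZero_X₂ _ (G.map_isZero hj)).of_iso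
    (I.isoRightDerivedObj G j)

end TwoTermResolution

theorem ShortComplex.shortExact_of_shortExact_map_evaluation {J C : Type*} [Category J]
    [Category C] [Abelian C] {S : ShortComplex (J ⥤ C)}
    (h : ∀ j, (S.map ((evaluation J C).obj j)).ShortExact) : S.ShortExact where
  exact := by
    rw [ShortComplex.exact_iff_isZero_homology, Functor.isZero_iff]
    exact fun j => ((ShortComplex.exact_iff_isZero_homology _).1 (h j).exact).of_iso
      (S.mapHomologyIso ((evaluation J C).obj j)).symm
  mono_f := (NatTrans.mono_iff_mono_app _).2 fun j => (h j).mono_f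
  epi_g := (NatTrans.epi_iff_epi_app _).2 fun j => (h j).epi_g

end CategoryTheory

universe v

namespace PosetSheaf

section Cofree

variable {k : Type} [Field k] {P : Type*} [Preorder P]

def cofree {ι : Type} (x : ι → P) (V : ι → ModuleCat.{v} k) : P ⥤ ModuleCat.{v} k where
  obj y := ModuleCat.of k (∀ i, PLift (y ≤ x i) → V i)
  map f := ModuleCat.ofHom
    { toFun g i h := g i ⟨(leOfHom f).trans h.down⟩
      map_add' _ _ := rfl
      map_smul' _ _ := rfl }

instance injective_cofree {ι : Type} (x : ι → P) (V : ι → ModuleCat.{v} k) :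
    Injective (cofree x V) := by
  refine ⟨fun {G H} τ f hf => ?_⟩
  have hinj (i : ι) : LinearMap.ker (f.app (x i)).hom = ⊥ :=
    LinearMap.ker_eq_bot.2 ((ModuleCat.mono_iff_injective _).1 inferInstance)
  choose r hr using fun i => (f.app (x i)).hom.exists_leftInverse_of_injective (hinj i)
  -- `σ i` extends the component of `τ` at `x i` along `f.app (x i)`.
  let σ (i : ι) : H.obj (x i) →ₗ[k] V i :=
    LinearMap.proj (⟨le_rfl⟩ : PLift (x i ≤ x i)) ∘ₗ LinearMap.proj i ∘ₗ (τ.app (x i)).hom ∘ₗ r i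
  refine ⟨{ app y := ModuleCat.ofHom
              (LinearMap.pi fun i => LinearMap.pi fun h => σ i ∘ₗ (H.map (homOfLE h.down)).hom)
            naturality y y' φ := by
              ext b
              funext i h
              exact congrArg (σ i) (H.map_comp_apply φ (homOfLE h.down) b).symm }, ?_⟩
  ext y a
  funext i h
  have hnat : H.map (homOfLE h.down) (f.app y a) = f.app (x i) (G.map (homOfLE h.down) a) :=
    (NatTrans.naturality_apply f (homOfLE h.down) a).symm
  show τ.app (x i) (r i (H.map (homOfLE h.down) (f.app y a))) i ⟨le_rfl⟩ = τ.app y a i h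
  have hri : r i (f.app (x i) (G.map (homOfLE h.down) a)) = G.map (homOfLE h.down) a :=
    LinearMap.congr_fun (hr i) _
  rw [hnat, hri, NatTrans.naturality_apply]
  rfl

end Cofree

structure HasseEdge (P : Type) [PartialOrder P] where
  src : P
  tgt : P
  covBy : src ⋖ tgt

def LowerCoverUniqueAbove (P : Type) [PartialOrder P] : Prop :=
  ∀ ⦃y u u' v : P⦄, y ≤ u → y ≤ u' → u ⋖ v → u' ⋖ v → u = u'

section Resolution

variable {k : Type} [Field k] {P : Type} [PartialOrder P] (F : P ⥤ ModuleCat.{v} k)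

def I₀ : P ⥤ ModuleCat.{v} k := cofree id F.obj

def I₁ : P ⥤ ModuleCat.{v} k := cofree HasseEdge.src fun e => F.obj e.tgt

def ε : F ⟶ I₀ F where
  app y := ModuleCat.ofHom <|
    LinearMap.pi fun v => LinearMap.pi fun h => (F.map (homOfLE h.down)).hom
  naturality y y' φ := by
    ext a
    funext v h
    exact (F.map_comp_apply φ (homOfLE h.down) a).symm

def d : I₀ F ⟶ I₁ F where
  app y := ModuleCat.ofHom
    { toFun g e h := F.map (homOfLE e.covBy.le) (g e.src h) - g e.tgt ⟨h.down.trans e.covBy.le⟩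
      map_add' g g' := by
        funext e h
        simp only [Pi.add_apply, map_add]
        abel
      map_smul' c g := by
        funext e h
        simp only [Pi.smul_apply, map_smul, smul_sub, RingHom.id_apply] }
  naturality _ _ _ := rfl

variable {F}

lemma ε_app_apply {y : P} (a : F.obj y) (v : P) (h : PLift (y ≤ v)) :
    (ε F).app y a v h = F.map (homOfLE h.down) a := rfl

lemma ε_comp_d : ε F ≫ d F = 0 := by
  ext y a
  funext e h
  exact sub_eq_zero.2 (F.map_comp_apply (homOfLE h.down) (homOfLE e.covBy.le) a).symm

lemma injective_ε_app (y : P) : Function.Injective ((ε F).app y) := fun a b hab => by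
  have hy := congrFun (congrFun hab y) ⟨le_rfl⟩
  simpa [ε_app_apply] using hy

instance : Injective (I₀ F) := inferInstanceAs (Injective (cofree _ _))

instance : Injective (I₁ F) := inferInstanceAs (Injective (cofree _ _))

variable [WellFoundedLT P] [IsStronglyCoatomic P]

lemma ε_app_eq_of_d_app_eq_zero {y : P} {g : (I₀ F).obj y} (hg : (d F).app y g = 0) :
    (ε F).app y (g y ⟨le_rfl⟩) = g := by
  funext v h
  induction v using WellFoundedLT.induction with
  | ind v ih =>
    rcases h.down.eq_or_lt with rfl | hyv
    · exact F.map_id_apply (X := y) _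
    · obtain ⟨u, hyu, huv⟩ := exists_le_covBy_of_lt hyv
      have hedge : F.map (homOfLE huv.le) (g u ⟨hyu⟩) = g v h :=
        sub_eq_zero.1 (congrFun (congrFun hg ⟨u, v, huv⟩) ⟨hyu⟩)
      calc (ε F).app y (g y ⟨le_rfl⟩) v h
          = F.map (homOfLE huv.le) ((ε F).app y (g y ⟨le_rfl⟩) u ⟨hyu⟩) :=
            F.map_comp_apply (homOfLE hyu) (homOfLE huv.le) _
        _ = g v h := by rw [ih u huv.lt ⟨hyu⟩]; exact hedge

lemma exact_ε_app_d_app (y : P) : Function.Exact ((ε F).app y) ((d F).app y) := fun g =>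
  ⟨fun hg => ⟨_, ε_app_eq_of_d_app_eq_zero hg⟩, by
    rintro ⟨a, rfl⟩
    exact congrArg (fun φ => φ.app y a) (ε_comp_d (F := F))⟩

open Classical in
noncomputable def potential (y : P) (η : (I₁ F).obj y) : (v : P) → F.obj v :=
  WellFoundedLT.fix fun v rec =>
    if hyv : y < v then
      have hu := (exists_le_covBy_of_lt hyv).choose_spec
      F.map (homOfLE hu.2.le) (rec _ hu.2.lt) - η ⟨_, v, hu.2⟩ ⟨hu.1⟩
    else 0

lemma potential_eq (htree : LowerCoverUniqueAbove P) {y u v : P} (η : (I₁ F).obj y)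
    (hyu : y ≤ u) (huv : u ⋖ v) :
    potential y η v = F.map (homOfLE huv.le) (potential y η u) - η ⟨u, v, huv⟩ ⟨hyu⟩ := by
  have hcover (c : P) (hyc : y ≤ c) (hcv : c ⋖ v) (hcu : c = u) :
      F.map (homOfLE hcv.le) (potential y η c) - η ⟨c, v, hcv⟩ ⟨hyc⟩
        = F.map (homOfLE huv.le) (potential y η u) - η ⟨u, v, huv⟩ ⟨hyu⟩ := by
    subst hcu; rfl
  have hyv := hyu.trans_lt huv.lt
  obtain ⟨hyc, hcv⟩ := (exists_le_covBy_of_lt hyv).choose_spec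
  rw [potential, WellFoundedLT.fix_eq, dif_pos hyv]
  exact hcover _ hyc hcv (htree hyc hyu hcv huv)

lemma d_app_potential (htree : LowerCoverUniqueAbove P) {y : P} (η : (I₁ F).obj y) :
    (d F).app y (fun v _ => potential y η v) = η := by
  funext e h
  show F.map _ (potential y η e.src) - potential y η e.tgt = η e h
  rw [potential_eq htree η h.down e.covBy, sub_sub_cancel]

variable (F) in
theorem shortExact (htree : LowerCoverUniqueAbove P) :
    (ShortComplex.mk (ε F) (d F) ε_comp_d).ShortExact :=
  ShortComplex.shortExact_of_shortExact_map_evaluation fun y =>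
    ModuleCat.shortComplex_shortExact _ (exact_ε_app_d_app y) (injective_ε_app y)
      fun η => ⟨_, d_app_potential htree η⟩

theorem isZero_rightDerived_obj (htree : LowerCoverUniqueAbove P) {D : Type*} [Category D]
    [Abelian D] [HasInjectiveResolutions (P ⥤ ModuleCat.{v} k)] (G : (P ⥤ ModuleCat.{v} k) ⥤ D)
    [G.Additive] (F : P ⥤ ModuleCat.{v} k) {j : ℕ} (hj : 2 ≤ j) :
    IsZero ((G.rightDerived j).obj F) :=
  (InjectiveResolution.ofShortExact (shortExact F htree)).isZero_rightDerived_obj G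
    (InjectiveResolution.ofShortExact_isZero_X _ hj)

end Resolution

end PosetSheaf

namespace Zigzag

variable {n : ℕ} {o : ℕ → Bool}

lemma ext {x y : Zigzag n o} (h : x.idx = y.idx) : x = y := Fin.ext h

lemma idx_lt (x : Zigzag n o) : x.idx < n + 1 := Fin.isLt x

lemma exists_idx_eq {m : ℕ} (hm : m < n + 1) : ∃ x : Zigzag n o, x.idx = m := ⟨⟨m, hm⟩, rfl⟩

lemma le_and_le_of_mem_uIcc {u v w : Zigzag n o} (huv : u ≤ v)
    (hw : w.idx ∈ Set.uIcc u.idx v.idx) : u ≤ w ∧ w ≤ v := by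
  rcases huv with ⟨h, hup⟩ | ⟨h, hdown⟩
  · rw [Set.uIcc_of_le (show u.idx ≤ v.idx from h)] at hw
    exact ⟨Or.inl ⟨hw.1, fun l h₁ h₂ => hup l h₁ (h₂.trans_le hw.2)⟩,
      Or.inl ⟨hw.2, fun l h₁ h₂ => hup l (hw.1.trans h₁) h₂⟩⟩
  · rw [Set.uIcc_of_ge (show v.idx ≤ u.idx from h)] at hw
    exact ⟨Or.inr ⟨hw.2, fun l h₁ h₂ => hdown l (hw.1.trans h₁) h₂⟩,
      Or.inr ⟨hw.1, fun l h₁ h₂ => hdown l h₁ (h₂.trans_le hw.2)⟩⟩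

lemma idx_adjacent_of_covBy {u v : Zigzag n o} (h : u ⋖ v) :
    u.idx = v.idx + 1 ∨ v.idx = u.idx + 1 := by
  have hne : u.idx ≠ v.idx := fun he => h.lt.ne (ext he)
  have := u.idx_lt
  have := v.idx_lt
  obtain ⟨w, hw, hadj⟩ : ∃ w : Zigzag n o,
      w.idx ∈ Set.uIcc u.idx v.idx ∧ (w.idx + 1 = v.idx ∨ w.idx = v.idx + 1) := by
    rcases hne.lt_or_gt with hlt | hgt
    · obtain ⟨w, hw⟩ : ∃ w : Zigzag n o, w.idx = v.idx - 1 := exists_idx_eq (by omega)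
      exact ⟨w, Set.mem_uIcc.2 (Or.inl ⟨by omega, by omega⟩), by omega⟩
    · obtain ⟨w, hw⟩ : ∃ w : Zigzag n o, w.idx = v.idx + 1 := exists_idx_eq (by omega)
      exact ⟨w, Set.mem_uIcc.2 (Or.inr ⟨by omega, by omega⟩), by omega⟩
  obtain ⟨huw, hwv⟩ := le_and_le_of_mem_uIcc h.le hw
  have hwv : w < v := hwv.lt_of_ne fun hwv => by subst hwv; omega
  obtain rfl : u = w := huw.eq_of_not_lt fun huw => h.2 huw hwv
  omega

lemma idx_not_mem_uIcc_of_le_of_covBy {y z v : Zigzag n o} (hyz : y ≤ z) (hzv : z ⋖ v) :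
    v.idx ∉ Set.uIcc y.idx z.idx :=
  fun hv => hzv.lt.not_ge (le_and_le_of_mem_uIcc hyz hv).2

theorem lowerCoverUniqueAbove : PosetSheaf.LowerCoverUniqueAbove (Zigzag n o) := by
  intro y u u' v hyu hyu' huv hu'v
  have hu := idx_not_mem_uIcc_of_le_of_covBy hyu huv
  have hu' := idx_not_mem_uIcc_of_le_of_covBy hyu' hu'v
  rw [Set.mem_uIcc] at hu hu'
  have := idx_adjacent_of_covBy huv
  have := idx_adjacent_of_covBy hu'v
  exact ext (by omega)

end Zigzag

universe u_1

theorem cohomology_zigzag_vanishes (k : Type) [Field k] (n : ℕ) (o : ℕ → Bool)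
    [(lim : (Zigzag n o ⥤ ModuleCat.{u_1} k) ⥤ ModuleCat.{u_1} k).Additive]
    [HasInjectiveResolutions (Zigzag n o ⥤ ModuleCat.{u_1} k)]
    (F : Zigzag n o ⥤ ModuleCat.{u_1} k)
    (j : ℕ) (hj : 2 ≤ j) :
    Limits.IsZero (((lim : (Zigzag n o ⥤ ModuleCat.{u_1} k) ⥤ ModuleCat.{u_1} k).rightDerived j).obj F) := by
  have : Finite (Zigzag n o) := inferInstanceAs (Finite (Fin (n + 1)))
  exact PosetSheaf.isZero_rightDerived_obj Zigzag.lowerCoverUniqueAbove lim F hj
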